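/- Let u be an octonion and define the linear map m_u on O ⊕ O by m_u(x, x') = (x'·u, -x·ū), where ū is the conjugate of u. Then m_u ∘ m_u = -|u|² · Id. -/

import Mathlib

open Quaternion

noncomputable section

/-- The octonions, via the Cayley–Dickson construction on the quaternions. -/
def O : Type := ℍ[ℝ] × ℍ[ℝ]

namespace O

instance : AddCommGroup O := inferInstanceAs (AddCommGroup (ℍ[ℝ] × ℍ[ℝ]))
instance : Module ℝ O := inferInstanceAs (Module ℝ (ℍ[ℝ] × ℍ[ℝ]))

def mk (a b : ℍ[ℝ]) : O := (a, b)
def fst (x : O) : ℍ[ℝ] := Prod.fst x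
def snd (x : O) : ℍ[ℝ] := Prod.snd x

instance : One O := ⟨mk 1 0⟩
/-- Cayley–Dickson multiplication. -/
instance : Mul O := ⟨fun x y =>
  mk (fst x * fst y - star (snd y) * snd x) (snd y * fst x + snd x * star (fst y))⟩

/-- Octonion conjugation. -/
def conj (x : O) : O := mk (star (fst x)) (-(snd x))

/-- The standard inner product on `O ≅ ℝ⁸`. -/
def inner (x y : O) : ℝ := (Inner.inner ℝ (fst x) (fst y) : ℝ) + (Inner.inner ℝ (snd x) (snd y) : ℝ)

def normSq (x : O) : ℝ := inner x x
def norm (x : O) : ℝ := Real.sqrt (normSq x)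

/-- The map `m_u` on `O ⊕ O`, given by `m_u (x, x') = (x'·u, -x·ū)`. -/
def m (u : O) : O × O → O × O := fun p => (p.2 * u, -(p.1 * conj u))

/-- The standard inner product on `O ⊕ O`. -/
def innerPair (p q : O × O) : ℝ := inner p.1 q.1 + inner p.2 q.2

end O


/-!
Applying `m_u` twice gives `(-(x ū) u, -(x' u) ū)`, so it suffices that `(z ū) u = |u|² z = (z u) ū`.
In Cayley–Dickson components both sides of these identities agree because `q̄ q = q q̄ = |q|²` is
real, hence central, in the quaternions; the second identity is the first one for `ū`.
-/

namespace O

lemma ext {x y : O} (h₁ : fst x = fst y) (h₂ : snd x = snd y) : x = y :=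
  Prod.ext h₁ h₂

@[simp] lemma fst_mul (x y : O) : fst (x * y) = fst x * fst y - star (snd y) * snd x := rfl
@[simp] lemma snd_mul (x y : O) : snd (x * y) = snd y * fst x + snd x * star (fst y) := rfl
@[simp] lemma fst_conj (x : O) : fst (conj x) = star (fst x) := rfl
@[simp] lemma snd_conj (x : O) : snd (conj x) = -snd x := rfl
@[simp] lemma fst_neg (x : O) : fst (-x) = -fst x := rfl
@[simp] lemma snd_neg (x : O) : snd (-x) = -snd x := rfl
@[simp] lemma fst_smul (r : ℝ) (x : O) : fst (r • x) = r • fst x := rfl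
@[simp] lemma snd_smul (r : ℝ) (x : O) : snd (r • x) = r • snd x := rfl

@[simp] lemma conj_conj (x : O) : conj (conj x) = x :=
  ext (star_star _) (neg_neg _)

lemma normSq_eq_add (x : O) :
    normSq x = Quaternion.normSq (fst x) + Quaternion.normSq (snd x) := by
  simp only [normSq, inner, Quaternion.inner_self]

@[simp] lemma normSq_conj (x : O) : normSq (conj x) = normSq x := by
  simp only [normSq_eq_add, fst_conj, snd_conj, Quaternion.normSq_star, Quaternion.normSq_neg]

protected lemma neg_mul (x y : O) : -x * y = -(x * y) := by
  apply ext <;> simp only [fst_mul, snd_mul, fst_neg, snd_neg, mul_neg, _root_.neg_mul,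
    sub_eq_add_neg, neg_add, neg_neg]

lemma mul_conj_mul (z u : O) : z * conj u * u = normSq u • z := by
  apply ext
  · calc fst (z * conj u * u)
        = fst z * (star (fst u) * fst u) + star (snd u) * snd u * fst z := by
          simp only [fst_mul, snd_mul, fst_conj, snd_conj, star_neg, star_star]; noncomm_ring
      _ = fst (normSq u • z) := by
        rw [star_mul_self, star_mul_self, mul_coe_eq_smul, coe_mul_eq_smul, fst_smul,
          normSq_eq_add, add_smul]
  · calc snd (z * conj u * u)
        = snd u * star (snd u) * snd z + snd z * (fst u * star (fst u)) := by
          simp only [fst_mul, snd_mul, fst_conj, snd_conj, star_neg, star_star]; noncomm_ring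
      _ = snd (normSq u • z) := by
        rw [self_mul_star, self_mul_star, mul_coe_eq_smul, coe_mul_eq_smul, snd_smul,
          normSq_eq_add, add_smul, add_comm]

lemma mul_mul_conj (z u : O) : z * u * conj u = normSq u • z := by
  simpa using mul_conj_mul z (conj u)

end O

/-- For any octonion `u`, `m_u ∘ m_u = -|u|² Id` on `O ⊕ O`. -/
theorem m_comp_self (u : O) : ∀ p : O × O, O.m u (O.m u p) = (-(O.normSq u)) • p := by
  rintro ⟨x, y⟩
  simp only [O.m, O.neg_mul, O.mul_conj_mul, O.mul_mul_conj, neg_smul, Prod.smul_mk, Prod.neg_mk]
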